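/- Fix p ∈ (0,1), η > 0, ν ∈ ℝ, δ > 0, τ > 0, and let (A, ζ) with A > 0 be a nontrivial equilibrium, i.e., g₁(A,ζ) = g₂(A,ζ) = 0. Then the Jacobian matrix J of (g₁, g₂) at (A, ζ) satisfies trace J = 2δ − 1/τ and det J = (p²ηA²/(8τ))(2pA² − 1). -/

import Mathlib

/-! The Jacobian entries are explicit polynomials in `A` and `ζ`. At a nontrivial equilibrium,
`g₁ = 0` divided by `A` gives `pν − ζ = −(p²η/4)A² + (p³η/8)A⁴`, and `g₂ = 0` gives
`ζ = δ + pν + (p²η/8)A²`; substituting both eliminates `ν` and `ζ`, so the trace and the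
determinant become polynomials in `A` alone, namely the stated ones. -/

open Matrix

/-- Slow-flow amplitude dynamics for a general network with a single nonlinear node
(small linear damping). -/
noncomputable def g₁ (p ν η A ζ : ℝ) : ℝ :=
  (1 / 2) * ((p * ν - ζ) * A + (p ^ 2 * η / 4) * A ^ 3 - (p ^ 3 * η / 8) * A ^ 5)

/-- Proposed autonomous damping dynamics for a general network. -/
noncomputable def g₂ (p ν η δ τ A ζ : ℝ) : ℝ :=
  τ⁻¹ * (-ζ + δ + p * ν + (p ^ 2 * η / 8) * A ^ 2)

/-- Jacobian matrix of the planar vector field `(g₁, g₂)` with respect to `(A, ζ)`. -/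
noncomputable def Jg (p ν η δ τ A ζ : ℝ) : Matrix (Fin 2) (Fin 2) ℝ :=
  !![deriv (fun a => g₁ p ν η a ζ) A, deriv (fun z => g₁ p ν η A z) ζ;
     deriv (fun a => g₂ p ν η δ τ a ζ) A, deriv (fun z => g₂ p ν η δ τ A z) ζ]

section Derivatives

variable (p ν η δ τ A ζ : ℝ)

theorem hasDerivAt_g₁_amplitude :
    HasDerivAt (fun a => g₁ p ν η a ζ)
      ((1 / 2) * ((p * ν - ζ) + (3 * p ^ 2 * η / 4) * A ^ 2 - (5 * p ^ 3 * η / 8) * A ^ 4)) A := by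
  refine (((((hasDerivAt_id' A).const_mul (p * ν - ζ)).add
    ((hasDerivAt_pow 3 A).const_mul (p ^ 2 * η / 4))).sub
    ((hasDerivAt_pow 5 A).const_mul (p ^ 3 * η / 8))).const_mul (1 / 2)).congr_deriv ?_
  push_cast
  ring

theorem hasDerivAt_g₁_damping : HasDerivAt (fun z => g₁ p ν η A z) (-(A / 2)) ζ := by
  refine (((((hasDerivAt_id' ζ).const_sub (p * ν)).mul_const A).add_const
    ((p ^ 2 * η / 4) * A ^ 3)).sub_const ((p ^ 3 * η / 8) * A ^ 5) |>.const_mul (1 / 2)).congr_deriv ?_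
  ring

theorem hasDerivAt_g₂_amplitude :
    HasDerivAt (fun a => g₂ p ν η δ τ a ζ) (τ⁻¹ * ((p ^ 2 * η / 4) * A)) A := by
  refine ((((hasDerivAt_pow 2 A).const_mul (p ^ 2 * η / 8)).const_add
    (-ζ + δ + p * ν)).const_mul τ⁻¹).congr_deriv ?_
  push_cast
  ring

theorem hasDerivAt_g₂_damping : HasDerivAt (fun z => g₂ p ν η δ τ A z) (-τ⁻¹) ζ := by
  refine ((((hasDerivAt_id' ζ).neg.add_const δ).add_const (p * ν)).add_const
    ((p ^ 2 * η / 8) * A ^ 2) |>.const_mul τ⁻¹).congr_deriv ?_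
  ring

theorem Jg_eq :
    Jg p ν η δ τ A ζ =
      !![(1 / 2) * ((p * ν - ζ) + (3 * p ^ 2 * η / 4) * A ^ 2 - (5 * p ^ 3 * η / 8) * A ^ 4),
          -(A / 2);
         τ⁻¹ * ((p ^ 2 * η / 4) * A), -τ⁻¹] := by
  rw [Jg, (hasDerivAt_g₁_amplitude ..).deriv, (hasDerivAt_g₁_damping ..).deriv,
    (hasDerivAt_g₂_amplitude ..).deriv, (hasDerivAt_g₂_damping ..).deriv]

end Derivatives

theorem g₁_eq_zero_iff {p ν η A ζ : ℝ} (hA : A ≠ 0) :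
    g₁ p ν η A ζ = 0 ↔ p * ν - ζ + (p ^ 2 * η / 4) * A ^ 2 - (p ^ 3 * η / 8) * A ^ 4 = 0 := by
  have : g₁ p ν η A ζ =
      (A / 2) * (p * ν - ζ + (p ^ 2 * η / 4) * A ^ 2 - (p ^ 3 * η / 8) * A ^ 4) := by
    rw [g₁]; ring
  rw [this, mul_eq_zero, or_iff_right (div_ne_zero hA two_ne_zero)]

theorem g₂_eq_zero_iff {p ν η δ τ A ζ : ℝ} (hτ : τ ≠ 0) :
    g₂ p ν η δ τ A ζ = 0 ↔ -ζ + δ + p * ν + (p ^ 2 * η / 8) * A ^ 2 = 0 := by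
  rw [g₂, mul_eq_zero, or_iff_right (inv_ne_zero hτ)]

theorem stmt_12_general (p η ν δ τ A ζ : ℝ) (hτ : 0 < τ) (hA : 0 < A)
    (h1 : g₁ p ν η A ζ = 0) (h2 : g₂ p ν η δ τ A ζ = 0) :
    (Jg p ν η δ τ A ζ).trace = 2 * δ - 1 / τ ∧
    (Jg p ν η δ τ A ζ).det = (p ^ 2 * η * A ^ 2 / (8 * τ)) * (2 * p * A ^ 2 - 1) := by
  have hg₁ := (g₁_eq_zero_iff hA.ne').mp h1
  have hg₂ := (g₂_eq_zero_iff hτ.ne').mp h2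
  rw [Jg_eq, trace_fin_two_of, det_fin_two_of]
  constructor
  · linear_combination (5 / 2) * hg₁ - 2 * hg₂
  · linear_combination (-(τ⁻¹ / 2)) * hg₁

/-- At any nontrivial equilibrium, the Jacobian satisfies
`trace J = 2δ − 1/τ` and `det J = (p²ηA²/(8τ))(2pA² − 1)`. -/
theorem stmt_12 (p η ν δ τ A ζ : ℝ) (hp : p ∈ Set.Ioo (0 : ℝ) 1) (hη : 0 < η)
    (hδ : 0 < δ) (hτ : 0 < τ) (hA : 0 < A)
    (h1 : g₁ p ν η A ζ = 0) (h2 : g₂ p ν η δ τ A ζ = 0) :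
    (Jg p ν η δ τ A ζ).trace = 2 * δ - 1 / τ ∧
    (Jg p ν η δ τ A ζ).det = (p ^ 2 * η * A ^ 2 / (8 * τ)) * (2 * p * A ^ 2 - 1) :=
  stmt_12_general p η ν δ τ A ζ hτ hA h1 h2
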